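/- If G=(U,W,E) is a P_7-free bipartite graph, then both neighbourhood graphs G_U and G_W are (P_4, C_4)-free. -/

import Mathlib

universe u

/-- `X` is complete to `Y` in `G`: every vertex of `X` is adjacent to every vertex of `Y`. -/
def CompleteTo {V : Type u} (G : SimpleGraph V) (X Y : Set V) : Prop :=
  ∀ ⦃x⦄, x ∈ X → ∀ ⦃y⦄, y ∈ Y → G.Adj x y

/-- `X` is anticomplete to `Y` in `G`. -/
def AnticompleteTo {V : Type u} (G : SimpleGraph V) (X Y : Set V) : Prop :=
  ∀ ⦃x⦄, x ∈ X → ∀ ⦃y⦄, y ∈ Y → ¬ G.Adj x y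

/-- `(U, W)` is a bipartition of the vertex set of `G` into two independent sets. -/
structure IsBipartition {V : Type u} (G : SimpleGraph V) (U W : Set V) : Prop where
  union_eq : U ∪ W = Set.univ
  disjoint : Disjoint U W
  cross : ∀ ⦃x y⦄, G.Adj x y → (x ∈ U ∧ y ∈ W) ∨ (x ∈ W ∧ y ∈ U)

/-- `G` contains an induced subgraph isomorphic to `H`. -/
def HasInducedCopy {α : Type*} {V : Type u} (H : SimpleGraph α) (G : SimpleGraph V) : Prop :=
  ∃ f : α ↪ V, ∀ a b : α, G.Adj (f a) (f b) ↔ H.Adj a b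

/-- `G` has no induced subgraph isomorphic to the chordless path `P_m` on `m` vertices. -/
def PathFree (m : ℕ) {V : Type u} (G : SimpleGraph V) : Prop :=
  ¬ HasInducedCopy (SimpleGraph.pathGraph m) G

/-- `G` is bipartite: its vertex set can be partitioned into (at most) two independent sets. -/
def Bipartite {V : Type u} (G : SimpleGraph V) : Prop :=
  ∃ U W : Set V, IsBipartition G U W

/-- The bipartite complement of `G` with respect to the parts `U` and `W`:
`u ∈ U` and `w ∈ W` are adjacent iff they are non-adjacent in `G`. -/
def bipComplOn {V : Type u} (G : SimpleGraph V) (U W : Set V) : SimpleGraph V where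
  Adj x y := ((x ∈ U ∧ y ∈ W) ∨ (x ∈ W ∧ y ∈ U)) ∧ x ≠ y ∧ ¬ G.Adj x y
  symm := by
    constructor
    rintro x y ⟨h1, h2, h3⟩
    exact ⟨by tauto, h2.symm, fun h => h3 h.symm⟩
  loopless := by constructor; rintro x ⟨_, h, _⟩; exact h rfl

/-- The neighbourhood graph `G_C` of a part `C`: vertices are the elements of `C` and two
distinct vertices are adjacent iff they have a common neighbour in `G`. -/
def nbrGraph {V : Type u} (G : SimpleGraph V) (C : Set V) : SimpleGraph C where
  Adj x y := x ≠ y ∧ ∃ z : V, G.Adj x z ∧ G.Adj y z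
  symm := by constructor; rintro x y ⟨h1, z, h2, h3⟩; exact ⟨h1.symm, z, h3, h2⟩
  loopless := by constructor; rintro x ⟨h, _⟩; exact h rfl

/-- A graph is complete if every two distinct vertices are adjacent. -/
def IsCompleteGraph {α : Type u} (H : SimpleGraph α) : Prop :=
  ∀ x y : α, x ≠ y → H.Adj x y

/-! If `a b c d` is a path of `G_U` in which `a, c` and `b, d` are non-adjacent, as in both `P₄`
and `C₄`, choose common neighbours `w₁, w₂, w₃` of the consecutive pairs. Any further edge among
`a w₂`, `a w₃`, `c w₁`, `d w₁`, `b w₃`, `d w₂` would give `a, c` or `b, d` a common neighbour, so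
`a w₁ b w₂ c w₃ d` is an induced `P₇` of `G`. -/

open SimpleGraph

theorem HasInducedCopy.of_adj_iff {α V : Type*} {H : SimpleGraph α} {G : SimpleGraph V}
    (hH : Function.Injective H.neighborSet) (f : α → V)
    (hf : ∀ a b, G.Adj (f a) (f b) ↔ H.Adj a b) : HasInducedCopy H G := by
  refine ⟨⟨f, fun a b hab => hH ?_⟩, hf⟩
  ext c
  rw [mem_neighborSet, mem_neighborSet, ← hf, ← hf, hab]

theorem pathGraph_seven_neighborSet_injective : Function.Injective (pathGraph 7).neighborSet := by
  have twinFree : ∀ a b : Fin 7, (∀ c, (pathGraph 7).Adj a c ↔ (pathGraph 7).Adj b c) → a = b := by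
    simp only [pathGraph_adj]
    decide
  exact fun a b h => twinFree a b fun c => Set.ext_iff.1 h c

def interleave {V : Type*} {k : ℕ} (x : Fin (k + 1) → V) (y : Fin k → V) (i : Fin (2 * k + 1)) :
    V :=
  if h : (i : ℕ) % 2 = 0 then x ⟨i / 2, by omega⟩ else y ⟨i / 2, by omega⟩

namespace IsBipartition

variable {V : Type u} {G : SimpleGraph V} {U W : Set V}

theorem symm (h : IsBipartition G U W) : IsBipartition G W U :=
  ⟨Set.union_comm U W ▸ h.union_eq, h.disjoint.symm, fun _ _ hxy => (h.cross hxy).symm⟩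

theorem mem_right_of_adj (h : IsBipartition G U W) {x y : V} (hx : x ∈ U) (hxy : G.Adj x y) :
    y ∈ W :=
  (h.cross hxy).elim And.right fun hxW => (h.disjoint.notMem_of_mem_left hx hxW.1).elim

theorem not_adj_of_mem_left (h : IsBipartition G U W) {x y : V} (hx : x ∈ U) (hy : y ∈ U) :
    ¬ G.Adj x y :=
  fun hxy => h.disjoint.notMem_of_mem_left hy (h.mem_right_of_adj hx hxy)

theorem adj_interleave_iff (hbip : IsBipartition G U W) {k : ℕ} {x : Fin (k + 1) → V}
    {y : Fin k → V} (hx : ∀ i, x i ∈ U) (hy : ∀ j, y j ∈ W)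
    (hxy : ∀ i j, G.Adj (x i) (y j) ↔ (j : ℕ) = i ∨ (j : ℕ) + 1 = i) (i j : Fin (2 * k + 1)) :
    G.Adj (interleave x y i) (interleave x y j) ↔ (pathGraph (2 * k + 1)).Adj i j := by
  rw [pathGraph_adj]
  unfold interleave
  split_ifs with hi hj hj
  · simp only [hbip.not_adj_of_mem_left (hx _) (hx _), false_iff]
    omega
  · rw [hxy]
    dsimp only
    omega
  · rw [G.adj_comm, hxy]
    dsimp only
    omega
  · simp only [hbip.symm.not_adj_of_mem_left (hy _) (hy _), false_iff]
    omega

theorem hasInducedCopy_pathGraph_seven (hbip : IsBipartition G U W) {a b c d : U}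
    (hab : (nbrGraph G U).Adj a b) (hbc : (nbrGraph G U).Adj b c) (hcd : (nbrGraph G U).Adj c d)
    (hac : ¬ (nbrGraph G U).Adj a c) (hbd : ¬ (nbrGraph G U).Adj b d)
    (hac' : a ≠ c) (hbd' : b ≠ d) : HasInducedCopy (pathGraph 7) G := by
  obtain ⟨-, w₁, haw₁, hbw₁⟩ := hab
  obtain ⟨-, w₂, hbw₂, hcw₂⟩ := hbc
  obtain ⟨-, w₃, hcw₃, hdw₃⟩ := hcd
  have haw₂ : ¬ G.Adj a w₂ := fun h => hac ⟨hac', w₂, h, hcw₂⟩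
  have haw₃ : ¬ G.Adj a w₃ := fun h => hac ⟨hac', w₃, h, hcw₃⟩
  have hcw₁ : ¬ G.Adj c w₁ := fun h => hac ⟨hac', w₁, haw₁, h⟩
  have hbw₃ : ¬ G.Adj b w₃ := fun h => hbd ⟨hbd', w₃, h, hdw₃⟩
  have hdw₁ : ¬ G.Adj d w₁ := fun h => hbd ⟨hbd', w₁, hbw₁, h⟩
  have hdw₂ : ¬ G.Adj d w₂ := fun h => hbd ⟨hbd', w₂, hbw₂, h⟩
  refine HasInducedCopy.of_adj_iff pathGraph_seven_neighborSet_injective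
    (interleave ![(a : V), b, c, d] ![w₁, w₂, w₃]) (hbip.adj_interleave_iff (k := 3) ?_ ?_ ?_)
  · intro i
    fin_cases i <;> simp
  · intro j
    fin_cases j <;> simp [hbip.mem_right_of_adj a.2 haw₁, hbip.mem_right_of_adj b.2 hbw₂,
      hbip.mem_right_of_adj c.2 hcw₃]
  · intro i j
    fin_cases i <;> fin_cases j <;> simp [*]

theorem not_hasInducedCopy_nbrGraph (hbip : IsBipartition G U W) (hP7 : PathFree 7 G)
    {H : SimpleGraph (Fin 4)} (h01 : H.Adj 0 1) (h12 : H.Adj 1 2) (h23 : H.Adj 2 3)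
    (h02 : ¬ H.Adj 0 2) (h13 : ¬ H.Adj 1 3) : ¬ HasInducedCopy H (nbrGraph G U) := by
  rintro ⟨g, hg⟩
  exact hP7 <| hbip.hasInducedCopy_pathGraph_seven ((hg 0 1).2 h01) ((hg 1 2).2 h12)
    ((hg 2 3).2 h23) (mt (hg 0 2).1 h02) (mt (hg 1 3).1 h13) (g.injective.ne (by decide))
    (g.injective.ne (by decide))

end IsBipartition

/-- If `G = (U, W, E)` is a `P₇`-free bipartite graph, then both
neighbourhood graphs `G_U` and `G_W` are `(P₄, C₄)`-free. -/
theorem nbrGraph_P4_C4_free {V : Type u} (G : SimpleGraph V) (U W : Set V)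
    (hbip : IsBipartition G U W) (hP7 : PathFree 7 G) :
    (¬ HasInducedCopy (SimpleGraph.pathGraph 4) (nbrGraph G U) ∧
      ¬ HasInducedCopy (SimpleGraph.cycleGraph 4) (nbrGraph G U)) ∧
    (¬ HasInducedCopy (SimpleGraph.pathGraph 4) (nbrGraph G W) ∧
      ¬ HasInducedCopy (SimpleGraph.cycleGraph 4) (nbrGraph G W)) := by
  have hP4 : ∀ {X Y : Set V}, IsBipartition G X Y →
      ¬ HasInducedCopy (pathGraph 4) (nbrGraph G X) := fun h =>
    h.not_hasInducedCopy_nbrGraph hP7 (by simp [pathGraph_adj]) (by simp [pathGraph_adj])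
      (by simp [pathGraph_adj]) (by simp [pathGraph_adj]) (by simp [pathGraph_adj])
  have hC4 : ∀ {X Y : Set V}, IsBipartition G X Y →
      ¬ HasInducedCopy (cycleGraph 4) (nbrGraph G X) := fun h =>
    h.not_hasInducedCopy_nbrGraph hP7 (by decide) (by decide) (by decide) (by decide) (by decide)
  exact ⟨⟨hP4 hbip, hC4 hbip⟩, hP4 hbip.symm, hC4 hbip.symm⟩
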